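/- Let K be a number field with ring of integers O_K, let M, N ∈ O_K be such that the curve E : y² = x(x+M)(x+N) is a nonsingular elliptic curve over K. Then the group E(K) of K-rational points contains a point of order 4 if and only if (M and N are both squares in O_K) or (−M and N−M are both squares in O_K) or (−N and M−N are both squares in O_K). -/

import Mathlib

open NumberField

section Helpers

open scoped Classical

open WeierstrassCurve.Affine

private lemma exists_sq' {K : Type*} [Field K] [NumberField K] (a : 𝓞 K) (β : K)
    (h : (a : K) = β ^ 2) : ∃ b : 𝓞 K, a = b ^ 2 := by
  have hβ : IsIntegral ℤ β := by
    refine IsIntegral.of_pow (n := 2) two_pos ?_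
    rw [← h]
    exact RingOfIntegers.isIntegral_coe a
  refine ⟨⟨β, hβ⟩, RingOfIntegers.ext ?_⟩
  simp only [RingOfIntegers.coe_eq_algebraMap, map_pow, RingOfIntegers.map_mk]
  exact h

private lemma sq_case0 {F : Type*} [Field F] (m n x y : F) (hy : y ≠ 0)
    (heq : y ^ 2 = x * (x + m) * (x + n))
    (hsl : (3 * x ^ 2 + 2 * (m + n) * x + m * n) ^ 2 = 4 * y ^ 2 * ((m + n) + 2 * x)) :
    m = (x * (x + m) / y) ^ 2 ∧ n = (x * (x + n) / y) ^ 2 := by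
  have hx2 : x ^ 2 = m * n := by
    have h : (x ^ 2 - m * n) ^ 2 = 0 := by
      linear_combination hsl + (4 * ((m + n) + 2 * x)) * heq
    exact sub_eq_zero.mp (pow_eq_zero_iff (two_ne_zero) |>.mp h)
  constructor
  · rw [div_pow, eq_div_iff (pow_ne_zero 2 hy)]
    linear_combination m * heq - x * (x + m) * hx2
  · rw [div_pow, eq_div_iff (pow_ne_zero 2 hy)]
    linear_combination n * heq - x * (x + n) * hx2

private lemma sq_case1 {F : Type*} [Field F] (m n x y : F) (hy : y ≠ 0)
    (heq : y ^ 2 = x * (x + m) * (x + n))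
    (hsl : (3 * x ^ 2 + 2 * (m + n) * x + m * n) ^ 2 = 4 * y ^ 2 * (-m + (m + n) + 2 * x)) :
    -m = (x * (x + m) / y) ^ 2 ∧ n - m = ((x + m) * (x + n) / y) ^ 2 := by
  have hq : x ^ 2 + 2 * m * x + m * n = 0 := by
    have h : (x ^ 2 + 2 * m * x + m * n) ^ 2 = 0 := by
      linear_combination hsl + (4 * (n + 2 * x)) * heq
    exact pow_eq_zero_iff (two_ne_zero) |>.mp h
  constructor
  · rw [div_pow, eq_div_iff (pow_ne_zero 2 hy)]
    linear_combination (-m) * heq - x * (x + m) * hq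
  · rw [div_pow, eq_div_iff (pow_ne_zero 2 hy)]
    linear_combination (n - m) * heq - (x + m) * (x + n) * hq

private lemma order_four_of {F : Type*} [Field F] [CharZero F] (m n x y t : F)
    (hy : y ≠ 0) (heq : y ^ 2 = x * (x + m) * (x + n))
    (hsl : (3 * x ^ 2 + 2 * (m + n) * x + m * n) ^ 2 = 4 * y ^ 2 * (t + (m + n) + 2 * x))
    (ht : t * (t + m) * (t + n) = 0) :
    ∃ P : WeierstrassCurve.Affine.Point (⟨0, m + n, 0, m * n, 0⟩ : WeierstrassCurve.Affine F),
      addOrderOf P = 4 := by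
  set W : WeierstrassCurve.Affine F := ⟨0, m + n, 0, m * n, 0⟩ with hWdef
  have ha1 : W.a₁ = 0 := rfl
  have ha2 : W.a₂ = m + n := rfl
  have ha3 : W.a₃ = 0 := rfl
  have ha4 : W.a₄ = m * n := rfl
  have ha6 : W.a₆ = 0 := rfl
  have hneg : ∀ a b : F, W.negY a b = -b := by
    intro a b
    simp [WeierstrassCurve.Affine.negY, ha1, ha3]
  have heqW : W.Equation x y := by
    rw [equation_iff, ha1, ha2, ha3, ha4, ha6]
    linear_combination heq
  have h₁ : W.Nonsingular x y := by
    rw [nonsingular_iff, ha1, ha3]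
    refine ⟨heqW, Or.inr fun hc => hy ?_⟩
    linear_combination hc / 2
  have hyne : y ≠ W.negY x y := by
    rw [hneg]
    intro hc
    exact hy (by linear_combination hc / 2)
  set L := W.slope x x y y with hL
  have hLval : L = (3 * x ^ 2 + 2 * (m + n) * x + m * n) / (2 * y) := by
    rw [hL, slope_of_Y_ne rfl hyne, hneg, ha1, ha2, ha4]
    ring_nf
  have hPP : Point.some _ _ h₁ + Point.some _ _ h₁ =
      Point.some _ _ (nonsingular_add h₁ h₁ fun hxy => hyne hxy.2) := Point.add_self_of_Y_ne hyne
  have hXval : W.addX x x L = t := by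
    rw [WeierstrassCurve.Affine.addX, ha1, ha2, hLval]
    field_simp
    linear_combination hsl
  have heq₂ := (nonsingular_add h₁ h₁ fun hxy => hyne hxy.2).1
  rw [equation_iff, ha1, ha2, ha3, ha4, ha6, hXval] at heq₂
  have hy₂ : W.addY x x y L = 0 := by
    refine pow_eq_zero_iff (n := 2) two_ne_zero |>.mp ?_
    linear_combination heq₂ + ht
  have hy₂neg : W.addY x x y L = W.negY (W.addX x x L) (W.addY x x y L) := by
    rw [hneg, hy₂, neg_zero]
  have hQQ : Point.some _ _ (nonsingular_add h₁ h₁ fun hxy => hyne hxy.2) +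
      Point.some _ _ (nonsingular_add h₁ h₁ fun hxy => hyne hxy.2) = 0 := Point.add_self_of_Y_eq hy₂neg
  refine ⟨Point.some _ _ h₁, ?_⟩
  have h4 : (4 : ℕ) • Point.some _ _ h₁ = 0 := by
    rw [show (4 : ℕ) = 2 + 2 from rfl, add_nsmul, two_nsmul, hPP, hQQ]
  have hdvd : addOrderOf (Point.some _ _ h₁) ∣ 4 := addOrderOf_dvd_of_nsmul_eq_zero h4
  have hne1 : addOrderOf (Point.some _ _ h₁) ≠ 1 := by
    intro hc
    have := addOrderOf_nsmul_eq_zero (Point.some _ _ h₁)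
    rw [hc, one_nsmul] at this
    exact Point.some_ne_zero h₁ this
  have hne2 : addOrderOf (Point.some _ _ h₁) ≠ 2 := by
    intro hc
    have := addOrderOf_nsmul_eq_zero (Point.some _ _ h₁)
    rw [hc, two_nsmul, hPP] at this
    exact Point.some_ne_zero _ this
  have h22 : addOrderOf (Point.some _ _ h₁) ∣ 2 ^ 2 := by simpa using hdvd
  obtain ⟨i, hi, hval⟩ := (Nat.dvd_prime_pow Nat.prime_two).mp h22
  interval_cases i
  · exact absurd (by simp at hval) hne1
  · exact absurd (by simpa using hval) hne2
  · exact hval.trans (by norm_num)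

private lemma coords_of_order_four {F : Type*} [Field F] [CharZero F] (m n : F)
    (P : WeierstrassCurve.Affine.Point (⟨0, m + n, 0, m * n, 0⟩ : WeierstrassCurve.Affine F))
    (hP : addOrderOf P = 4) :
    ∃ x y t : F, y ≠ 0 ∧ y ^ 2 = x * (x + m) * (x + n) ∧
      (3 * x ^ 2 + 2 * (m + n) * x + m * n) ^ 2 = 4 * y ^ 2 * (t + (m + n) + 2 * x) ∧
      (t = 0 ∨ t = -m ∨ t = -n) := by
  cases P with
  | zero =>
    rw [← Point.zero_def, addOrderOf_zero] at hP
    norm_num at hP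
  | some x y h =>
    let W : WeierstrassCurve.Affine F := ⟨0, m + n, 0, m * n, 0⟩
    have hWdef : W = ⟨0, m + n, 0, m * n, 0⟩ := rfl
    have ha1 : W.a₁ = 0 := rfl
    have ha2 : W.a₂ = m + n := rfl
    have ha3 : W.a₃ = 0 := rfl
    have ha4 : W.a₄ = m * n := rfl
    have ha6 : W.a₆ = 0 := rfl
    have hneg : ∀ a b : F, W.negY a b = -b := by
      intro a b
      simp [WeierstrassCurve.Affine.negY, ha1, ha3]
    have hPP0 : Point.some _ _ h + Point.some _ _ h ≠ 0 := by
      intro h0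
      have h2 : addOrderOf (Point.some _ _ h) ∣ 2 :=
        addOrderOf_dvd_of_nsmul_eq_zero (by rw [two_nsmul]; exact h0)
      rw [hP] at h2
      norm_num at h2
    have hyne : y ≠ W.negY x y := by
      intro hc
      exact hPP0 (Point.add_self_of_Y_eq hc)
    have hy : y ≠ 0 := by
      intro hc
      apply hyne
      rw [hneg, hc, neg_zero]
    set L := W.slope x x y y with hL
    have hLval : L = (3 * x ^ 2 + 2 * (m + n) * x + m * n) / (2 * y) := by
      rw [hL, slope_of_Y_ne rfl hyne, hneg, ha1, ha2, ha4]
      ring_nf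
    have hPP : Point.some _ _ h + Point.some _ _ h =
        Point.some _ _ (nonsingular_add h h fun hxy => hyne hxy.2) := Point.add_self_of_Y_ne hyne
    have h4 : Point.some _ _ (nonsingular_add h h fun hxy => hyne hxy.2) +
        Point.some _ _ (nonsingular_add h h fun hxy => hyne hxy.2) = 0 := by
      have h0 := addOrderOf_nsmul_eq_zero (Point.some _ _ h)
      rw [hP, show (4 : ℕ) = 2 + 2 from rfl, add_nsmul, two_nsmul, hPP] at h0
      exact h0
    have hy₂neg : W.addY x x y L = W.negY (W.addX x x L) (W.addY x x y L) := by
      by_contra hc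
      rw [Point.add_self_of_Y_ne hc] at h4
      exact Point.some_ne_zero _ h4
    have hy₂ : W.addY x x y L = 0 := by
      rw [hneg] at hy₂neg
      linear_combination hy₂neg / 2
    have heq₂ := (nonsingular_add h h fun hxy => hyne hxy.2).1
    rw [equation_iff, ha1, ha2, ha3, ha4, ha6, hy₂] at heq₂
    have hfac : W.addX x x L * (W.addX x x L + m) * (W.addX x x L + n) = 0 := by
      linear_combination -heq₂
    have heq1 := h.1
    rw [equation_iff, ha1, ha2, ha3, ha4, ha6] at heq1
    refine ⟨x, y, W.addX x x L, hy, by linear_combination heq1, ?_, ?_⟩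
    · rw [WeierstrassCurve.Affine.addX, ha1, ha2, hLval]
      field_simp
      ring
    · rcases mul_eq_zero.mp hfac with h' | h'
      · rcases mul_eq_zero.mp h' with h'' | h''
        · exact Or.inl h''
        · exact Or.inr (Or.inl (by linear_combination h''))
      · exact Or.inr (Or.inr (by linear_combination h'))

end Helpers

open scoped Classical in
/-- For a number field `K` and `M, N ∈ 𝓞 K` with the curve
`E : y² = x(x+M)(x+N)` nonsingular, `E(K)` contains a point of order 4 iff
(`M` and `N` are squares in `𝓞 K`) or (`-M` and `N - M` are squares in `𝓞 K`) or
(`-N` and `M - N` are squares in `𝓞 K`). -/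
theorem point_of_order_four_iff
    (K : Type*) [Field K] [NumberField K]
    (M N : 𝓞 K)
    (hM : M ≠ 0) (hN : N ≠ 0) (hMN : M ≠ N)
    (W : WeierstrassCurve.Affine K)
    (hW : W = ⟨0, (M : K) + (N : K), 0, (M : K) * (N : K), 0⟩) :
    (∃ P : W.Point, addOrderOf P = 4) ↔
      ((∃ b : 𝓞 K, M = b ^ 2) ∧ (∃ b : 𝓞 K, N = b ^ 2)) ∨
      ((∃ b : 𝓞 K, -M = b ^ 2) ∧ (∃ b : 𝓞 K, N - M = b ^ 2)) ∨
      ((∃ b : 𝓞 K, -N = b ^ 2) ∧ (∃ b : 𝓞 K, M - N = b ^ 2)) := by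
  have hmK : (M : K) ≠ 0 := fun hc => hM (RingOfIntegers.coe_eq_zero_iff.mp hc)
  have hnK : (N : K) ≠ 0 := fun hc => hN (RingOfIntegers.coe_eq_zero_iff.mp hc)
  have hmnK : (M : K) ≠ (N : K) := fun hc => hMN (RingOfIntegers.ext hc)
  subst hW
  constructor
  · rintro ⟨P, hP⟩
    obtain ⟨x, y, t, hy, heq, hsl, hts⟩ := coords_of_order_four (M : K) (N : K) P hP
    rcases hts with rfl | rfl | rfl
    · left
      obtain ⟨h1, h2⟩ := sq_case0 (M : K) (N : K) x y hy heq (by linear_combination hsl)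
      exact ⟨exists_sq' M _ h1, exists_sq' N _ h2⟩
    · right; left
      obtain ⟨h1, h2⟩ := sq_case1 (M : K) (N : K) x y hy heq (by linear_combination hsl)
      refine ⟨exists_sq' (-M) (x * (x + (M : K)) / y) ?_, exists_sq' (N - M) ((x + (M : K)) * (x + (N : K)) / y) ?_⟩
      · push_cast
        exact h1
      · push_cast
        exact h2
    · right; right
      obtain ⟨h1, h2⟩ := sq_case1 (N : K) (M : K) x y hy (by linear_combination heq)
        (by linear_combination hsl)
      refine ⟨exists_sq' (-N) (x * (x + (N : K)) / y) ?_, exists_sq' (M - N) ((x + (N : K)) * (x + (M : K)) / y) ?_⟩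
      · push_cast
        exact h1
      · push_cast
        exact h2
  · rintro (⟨⟨b, hb⟩, ⟨c, hc⟩⟩ | ⟨⟨b, hb⟩, ⟨c, hc⟩⟩ | ⟨⟨b, hb⟩, ⟨c, hc⟩⟩)
    · have hb' : (M : K) = (b : K) ^ 2 := by exact_mod_cast congrArg (fun z : 𝓞 K => (z : K)) hb
      have hc' : (N : K) = (c : K) ^ 2 := by exact_mod_cast congrArg (fun z : 𝓞 K => (z : K)) hc
      have hbne : (b : K) ≠ 0 := fun h0 => hmK (by rw [hb', h0]; ring)
      have hcne : (c : K) ≠ 0 := fun h0 => hnK (by rw [hc', h0]; ring)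
      have hsum : (b : K) + (c : K) ≠ 0 := by
        intro h0
        exact hmnK (by
          rw [hb', hc']
          linear_combination ((b : K) - (c : K)) * (eq_neg_of_add_eq_zero_left h0))
      exact order_four_of (M : K) (N : K) ((b : K) * c) ((b : K) * c * ((b : K) + c)) 0
        (mul_ne_zero (mul_ne_zero hbne hcne) hsum)
        (by rw [hb', hc']; ring) (by rw [hb', hc']; ring) (by ring)
    · have hb' : -(M : K) = (b : K) ^ 2 := by exact_mod_cast congrArg (fun z : 𝓞 K => (z : K)) hb
      have hc' : (N : K) - (M : K) = (c : K) ^ 2 := by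
        exact_mod_cast congrArg (fun z : 𝓞 K => (z : K)) hc
      have hmval : (M : K) = -(b : K) ^ 2 := by linear_combination -hb'
      have hnval : (N : K) = (c : K) ^ 2 - (b : K) ^ 2 := by linear_combination hc' + hmval
      have hbne : (b : K) ≠ 0 := fun h0 => hmK (by rw [hmval, h0]; ring)
      have hcne : (c : K) ≠ 0 := by
        intro h0
        apply sub_ne_zero.mpr (Ne.symm hmnK)
        rw [hc', h0]
        ring
      have hsum : (b : K) + (c : K) ≠ 0 := by
        intro h0
        exact hnK (by
          linear_combination hc' - hb' +
            ((c : K) - (b : K)) * (eq_neg_of_add_eq_zero_left h0))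
      exact order_four_of (M : K) (N : K) ((b : K) * c + (b : K) ^ 2)
        ((b : K) * c * ((b : K) + c)) ((b : K) ^ 2)
        (mul_ne_zero (mul_ne_zero hbne hcne) hsum)
        (by rw [hmval, hnval]; ring) (by rw [hmval, hnval]; ring) (by rw [hmval]; ring)
    · have hb' : -(N : K) = (b : K) ^ 2 := by exact_mod_cast congrArg (fun z : 𝓞 K => (z : K)) hb
      have hc' : (M : K) - (N : K) = (c : K) ^ 2 := by
        exact_mod_cast congrArg (fun z : 𝓞 K => (z : K)) hc
      have hnval : (N : K) = -(b : K) ^ 2 := by linear_combination -hb'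
      have hmval : (M : K) = (c : K) ^ 2 - (b : K) ^ 2 := by linear_combination hc' + hnval
      have hbne : (b : K) ≠ 0 := fun h0 => hnK (by rw [hnval, h0]; ring)
      have hcne : (c : K) ≠ 0 := by
        intro h0
        apply sub_ne_zero.mpr hmnK
        rw [hc', h0]
        ring
      have hsum : (b : K) + (c : K) ≠ 0 := by
        intro h0
        exact hmK (by
          linear_combination hc' - hb' +
            ((c : K) - (b : K)) * (eq_neg_of_add_eq_zero_left h0))
      exact order_four_of (M : K) (N : K) ((b : K) * c + (b : K) ^ 2)
        ((b : K) * c * ((b : K) + c)) ((b : K) ^ 2)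
        (mul_ne_zero (mul_ne_zero hbne hcne) hsum)
        (by rw [hmval, hnval]; ring) (by rw [hmval, hnval]; ring) (by rw [hnval]; ring)
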